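/- (Polynomial-coefficient reformulation, Formula (4).) Let X = (a_1, ..., a_m) be a finite list of nonzero vectors spanning ℂ^n and μ : {1,...,m} → ℂ. Define X_p := { i : ⟨a_i | p⟩ + μ_i = 0 } and P(X,μ) := { p ∈ ℂ^n : {a_i : i ∈ X_p} spans ℂ^n }. Then there exist polynomials C_p ∈ ℂ[x_1,...,x_n], one for each p ∈ P(X,μ), such that in the fraction field K = ℂ(x_1,...,x_n) one has ∏_{i=1}^m 1/(a_i + μ_i) = Σ_{p ∈ P(X,μ)} C_p · ∏_{i ∈ X_p} 1/(a_i + μ_i). -/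

import Mathlib

open MvPolynomial

/-- The linear polynomial `∑ j, a j * x j ∈ ℂ[x_1, …, x_n]` attached to a vector `a ∈ ℂ^n`. -/
noncomputable def linForm {n : ℕ} (a : Fin n → ℂ) : MvPolynomial (Fin n) ℂ :=
  ∑ j, C (a j) * X j

/-- The element `a i + μ i` of the rational function field `K = ℂ(x_1, …, x_n)`. -/
noncomputable def affForm {n m : ℕ} (a : Fin m → (Fin n → ℂ)) (μ : Fin m → ℂ) (i : Fin m) :
    FractionRing (MvPolynomial (Fin n) ℂ) :=
  algebraMap (MvPolynomial (Fin n) ℂ) (FractionRing (MvPolynomial (Fin n) ℂ))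
    (linForm (a i) + C (μ i))

/-- `X_p`: the set of indices `i` such that `⟨a i | p⟩ + μ i = 0`. -/
def Xp {n m : ℕ} (a : Fin m → (Fin n → ℂ)) (μ : Fin m → ℂ) (p : Fin n → ℂ) : Set (Fin m) :=
  {i | (∑ j, a i j * p j) + μ i = 0}

/-- `X_p` as a finite set of indices. -/
noncomputable def XpFinset {n m : ℕ} (a : Fin m → (Fin n → ℂ)) (μ : Fin m → ℂ)
    (p : Fin n → ℂ) : Finset (Fin m) :=
  (Set.toFinite (Xp a μ p)).toFinset

/-- `P(X, μ)`: the points of the arrangement, i.e. the points `p` such that the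
vectors `{a i : i ∈ X_p}` span `ℂ^n`. -/
def armPoints {n m : ℕ} (a : Fin m → (Fin n → ℂ)) (μ : Fin m → ℂ) : Set (Fin n → ℂ) :=
  {p | Submodule.span ℂ (a '' Xp a μ p) = ⊤}

/-! By strong induction on a spanning set `S` of indices, `∏_{i ∈ S} 1/(a i + μ i)` lies in the
`ℂ[x]`-span of the fractions `∏_{i ∈ X_p} 1/(a i + μ i)`, `p ∈ P(X, μ)`. If the affine system
`⟨a i | p⟩ + μ i = 0` (`i ∈ S`) has a solution `p`, then `S ⊆ X_p`, so `p ∈ P(X, μ)` and the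
product is a polynomial multiple of the one over `X_p`. Otherwise the Fredholm alternative gives
scalars `c i` with `∑ c i • a i = 0` and `∑ c i * μ i = 1`, i.e. `∑ c i (a i + μ i) = 1`;
multiplying by this relation writes the product as a combination of the products over
`S \ {i}` with `c i ≠ 0`, and each such subfamily still spans. -/

open Matrix

theorem Matrix.exists_mulVec_eq_or_exists_vecMul_eq_zero {K ι σ : Type*} [Field K]
    [Fintype ι] [Fintype σ] (A : Matrix ι σ K) (y : ι → K) :
    (∃ p, A *ᵥ p = y) ∨ ∃ c, c ᵥ* A = 0 ∧ c ⬝ᵥ y = 1 := by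
  classical
  refine or_iff_not_imp_left.mpr fun hy => ?_
  have hy' : y ∉ LinearMap.range A.mulVecLin := by simpa using hy
  obtain ⟨f, hfy, hfA⟩ := Submodule.exists_dual_map_eq_bot_of_notMem hy' inferInstance
  set d : ι → K := fun i => f fun j => if i = j then 1 else 0
  have hf : ∀ v, f v = d ⬝ᵥ v := fun v => by
    simp [LinearMap.pi_apply_eq_sum_univ f v, dotProduct, d, mul_comm]
  refine ⟨(f y)⁻¹ • d, dotProduct_eq_zero _ fun p => ?_, ?_⟩
  · have hAp : f (A *ᵥ p) ∈ (LinearMap.range A.mulVecLin).map f :=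
      Submodule.mem_map_of_mem ⟨p, rfl⟩
    rw [hfA, Submodule.mem_bot] at hAp
    rw [← dotProduct_mulVec, smul_dotProduct, ← hf, hAp, smul_zero]
  · rw [smul_dotProduct, ← hf, smul_eq_mul, inv_mul_cancel₀ hfy]

theorem exists_dotProduct_add_eq_zero_or_exists_sum_smul_eq_zero {K ι σ : Type*} [Field K]
    [Fintype σ] (a : ι → σ → K) (μ : ι → K) (S : Finset ι) :
    (∃ p, ∀ i ∈ S, a i ⬝ᵥ p + μ i = 0) ∨
      ∃ c : ι → K, ∑ i ∈ S, c i • a i = 0 ∧ ∑ i ∈ S, c i * μ i = 1 := by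
  classical
  rcases (Matrix.of fun i : S => a i).exists_mulVec_eq_or_exists_vecMul_eq_zero
    (fun i => -μ i) with ⟨p, hp⟩ | ⟨c, hcA, hcμ⟩
  · refine .inl ⟨p, fun i hi => ?_⟩
    have := congrFun hp ⟨i, hi⟩
    simp only [mulVec, of_apply] at this
    rw [this, neg_add_cancel]
  · refine .inr ⟨fun i => if h : i ∈ S then -c ⟨i, h⟩ else 0, ?_, ?_⟩
    · rw [← Finset.sum_coe_sort]
      simp only [Finset.coe_mem, ↓reduceDIte, Subtype.coe_eta, neg_smul, Finset.sum_neg_distrib,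
        neg_eq_zero]
      rw [← hcA, vecMul_eq_sum]
      rfl
    · rw [← Finset.sum_coe_sort, ← hcμ]
      simp [dotProduct]

theorem Finset.prod_inv_eq_sum_mul_prod_erase_inv {F ι : Type*} [Field F] [DecidableEq ι]
    {S : Finset ι} {g c : ι → F} (hg : ∀ i ∈ S, g i ≠ 0) (hcg : ∑ i ∈ S, c i * g i = 1) :
    ∏ i ∈ S, (g i)⁻¹ = ∑ i ∈ S, c i * ∏ j ∈ S.erase i, (g j)⁻¹ := by
  calc ∏ i ∈ S, (g i)⁻¹ = ∑ i ∈ S, c i * g i * ∏ j ∈ S, (g j)⁻¹ := by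
        rw [← Finset.sum_mul, hcg, one_mul]
    _ = ∑ i ∈ S, c i * ∏ j ∈ S.erase i, (g j)⁻¹ := Finset.sum_congr rfl fun i hi => by
        rw [← Finset.mul_prod_erase S _ hi, mul_assoc, mul_inv_cancel_left₀ (hg i hi)]

theorem Finset.prod_inv_eq_prod_sdiff_mul_prod_inv {F ι : Type*} [Field F] [DecidableEq ι]
    {S T : Finset ι} {g : ι → F} (hST : S ⊆ T) (hg : ∀ i ∈ T \ S, g i ≠ 0) :
    ∏ i ∈ S, (g i)⁻¹ = (∏ i ∈ T \ S, g i) * ∏ i ∈ T, (g i)⁻¹ := by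
  rw [← Finset.prod_sdiff hST, Finset.prod_inv_distrib (s := T \ S), mul_inv_cancel_left₀
    (Finset.prod_ne_zero_iff.mpr hg)]

theorem Submodule.span_image_erase_of_sum_smul_eq_zero {K ι V : Type*} [Field K]
    [AddCommGroup V] [Module K V] [DecidableEq ι] {S : Finset ι} {v : ι → V} {c : ι → K}
    (hcv : ∑ j ∈ S, c j • v j = 0) {i : ι} (hi : i ∈ S) (hci : c i ≠ 0) :
    span K (v '' ↑(S.erase i)) = span K (v '' ↑S) := by
  have hvi : c i • v i ∈ span K (v '' ↑(S.erase i)) := by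
    rw [← Finset.add_sum_erase S _ hi, add_eq_zero_iff_eq_neg] at hcv
    rw [hcv]
    exact neg_mem (sum_smul_mem _ _ fun j hj => subset_span (Set.mem_image_of_mem v hj))
  rw [← Finset.insert_erase hi, Finset.coe_insert, Set.image_insert_eq,
    Finset.erase_insert_eq_erase, Finset.erase_idem,
    span_insert_eq_span ((smul_mem_iff _ hci).mp hvi)]

theorem eval_linForm {n : ℕ} (b p : Fin n → ℂ) : eval p (linForm b) = b ⬝ᵥ p := by
  simp [linForm, dotProduct]

theorem linForm_add_C_ne_zero {n : ℕ} {b : Fin n → ℂ} (hb : b ≠ 0) (c : ℂ) :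
    linForm b + C c ≠ 0 := by
  intro h
  have hval : ∀ p, b ⬝ᵥ p + c = 0 := fun p => by
    simpa [eval_linForm] using congrArg (eval p) h
  have hc : c = 0 := by simpa using hval 0
  exact hb (dotProduct_eq_zero b fun p => by simpa [hc] using hval p)

theorem affForm_ne_zero {n m : ℕ} {a : Fin m → Fin n → ℂ} (μ : Fin m → ℂ) {i : Fin m}
    (hi : a i ≠ 0) : affForm a μ i ≠ 0 := by
  rw [affForm, Ne, IsFractionRing.to_map_eq_zero_iff]
  exact linForm_add_C_ne_zero hi (μ i)

theorem sum_C_mul_linForm_add_C {n m : ℕ} (a : Fin m → Fin n → ℂ) (μ c : Fin m → ℂ)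
    (S : Finset (Fin m)) :
    ∑ i ∈ S, C (c i) * (linForm (a i) + C (μ i)) =
      linForm (∑ i ∈ S, c i • a i) + C (∑ i ∈ S, c i * μ i) := by
  simp only [linForm, mul_add, Finset.mul_sum, Finset.sum_add_distrib, Finset.sum_apply,
    Pi.smul_apply, smul_eq_mul, map_sum, C_mul, Finset.sum_mul, mul_assoc, add_left_inj]
  exact Finset.sum_comm

section Arrangement

variable {n m : ℕ} (a : Fin m → Fin n → ℂ) (μ : Fin m → ℂ)

theorem mem_XpFinset {p : Fin n → ℂ} {i : Fin m} :
    i ∈ XpFinset a μ p ↔ a i ⬝ᵥ p + μ i = 0 := by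
  simp [XpFinset, Xp, dotProduct]

noncomputable def invProdAt (p : Fin n → ℂ) : FractionRing (MvPolynomial (Fin n) ℂ) :=
  ∏ i ∈ XpFinset a μ p, (affForm a μ i)⁻¹

theorem prod_inv_affForm_mem_span_of_subset {S : Finset (Fin m)} {p : Fin n → ℂ}
    (ha : ∀ i, a i ≠ 0) (hS : Submodule.span ℂ (a '' S) = ⊤) (hSp : S ⊆ XpFinset a μ p) :
    ∏ i ∈ S, (affForm a μ i)⁻¹ ∈
      Submodule.span (MvPolynomial (Fin n) ℂ) (invProdAt a μ '' armPoints a μ) := by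
  classical
  have hp : p ∈ armPoints a μ := by
    refine eq_top_mono (Submodule.span_mono (Set.image_mono fun i hi => ?_)) hS
    simpa [XpFinset] using hSp hi
  rw [Finset.prod_inv_eq_prod_sdiff_mul_prod_inv hSp fun i _ => affForm_ne_zero μ (ha i)]
  have : ∏ i ∈ XpFinset a μ p \ S, affForm a μ i =
      algebraMap _ _ (∏ i ∈ XpFinset a μ p \ S, (linForm (a i) + C (μ i))) := by
    simp [affForm]
  rw [this, ← Algebra.smul_def]
  exact Submodule.smul_mem _ _ (Submodule.subset_span ⟨p, hp, rfl⟩)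

theorem prod_inv_affForm_mem_span (ha : ∀ i, a i ≠ 0) (S : Finset (Fin m))
    (hS : Submodule.span ℂ (a '' S) = ⊤) :
    ∏ i ∈ S, (affForm a μ i)⁻¹ ∈
      Submodule.span (MvPolynomial (Fin n) ℂ) (invProdAt a μ '' armPoints a μ) := by
  classical
  induction S using Finset.strongInduction with
  | _ S ih =>
  rcases exists_dotProduct_add_eq_zero_or_exists_sum_smul_eq_zero a μ S with
    ⟨p, hp⟩ | ⟨c, hca, hcμ⟩
  · exact prod_inv_affForm_mem_span_of_subset a μ ha hS fun i hi =>
      (mem_XpFinset a μ).mpr (hp i hi)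
  have hcg : ∑ i ∈ S, algebraMap (MvPolynomial (Fin n) ℂ) _ (C (c i)) * affForm a μ i = 1 := by
    simp only [affForm, ← map_mul, ← map_sum, sum_C_mul_linForm_add_C, hca, hcμ]
    simp [linForm]
  rw [Finset.prod_inv_eq_sum_mul_prod_erase_inv (fun i _ => affForm_ne_zero μ (ha i)) hcg]
  refine Submodule.sum_mem _ fun i hi => ?_
  rcases eq_or_ne (c i) 0 with hci | hci
  · simp [hci]
  rw [← Algebra.smul_def]
  refine Submodule.smul_mem _ _ (ih _ (Finset.erase_ssubset hi) ?_)
  rwa [Submodule.span_image_erase_of_sum_smul_eq_zero hca hi hci]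

end Arrangement

/-- Polynomial-coefficient reformulation (Formula (4)): there exist polynomials
`C_p ∈ ℂ[x_1, …, x_n]`, one for each point `p ∈ P(X, μ)` of the arrangement, such that
in `K = ℂ(x_1, …, x_n)` one has
`∏ i, 1/(a i + μ i) = ∑_{p ∈ P(X,μ)} C_p ∏_{i ∈ X_p} 1/(a i + μ i)`. -/
theorem polynomial_coefficient_formula {n m : ℕ} (a : Fin m → (Fin n → ℂ)) (μ : Fin m → ℂ)
    (ha : ∀ i, a i ≠ 0)
    (hspan : Submodule.span ℂ (Set.range a) = ⊤) :
    ∃ Cp : (Fin n → ℂ) → MvPolynomial (Fin n) ℂ,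
      ∏ i, (affForm a μ i)⁻¹ =
        ∑ᶠ p ∈ armPoints a μ,
          algebraMap (MvPolynomial (Fin n) ℂ) (FractionRing (MvPolynomial (Fin n) ℂ))
              (Cp p) *
            ∏ i ∈ XpFinset a μ p, (affForm a μ i)⁻¹ := by
  have hmem := prod_inv_affForm_mem_span a μ ha Finset.univ (by simpa using hspan)
  obtain ⟨l, hl, hsum⟩ := Finsupp.mem_span_image_iff_linearCombination _ |>.mp hmem
  refine ⟨l, ?_⟩
  rw [← hsum, Finsupp.linearCombination_apply, Finsupp.sum,
    finsum_mem_eq_sum_of_subset _ (fun p hp => ?_) hl]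
  · simp [invProdAt, Algebra.smul_def]
  · simpa using fun h0 => hp.2 (by simp [h0])
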